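/- Let R1 : K1 → K3 and R2 : K2 → K4 be closed relations between formal contexts, and define (R1 ⊗ R2)(g1,g2) := cl(R1(g1) × R2(g2)) ⊆ G3 × G4, with closure taken in K3 ⊗ K4. Then for all subsets A ⊆ G1 and B ⊆ G2 one has cl((R1 ⊗ R2)(A×B)) = cl(R1(A) × R2(B)), with closures taken in K3 ⊗ K4. -/

import Mathlib

open Set

/-- A formal context `(G, M, I)`: a set of objects, a set of attributes,
and an incidence relation between them. -/
structure FormalContext where
  G : Type*
  M : Type*
  I : G → M → Prop

namespace FormalContext

variable (K : FormalContext)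

/-- `A'` for a set of objects `A ⊆ G`. -/
def polarG (A : Set K.G) : Set K.M := upperPolar K.I A

/-- `B'` for a set of attributes `B ⊆ M`. -/
def polarM (B : Set K.M) : Set K.G := lowerPolar K.I B

/-- The closure `cl(A) = A''` of a set of objects. -/
def clG (A : Set K.G) : Set K.G := K.polarM (K.polarG A)

/-- The closure `cl(B) = B''` of a set of attributes. -/
def clM (B : Set K.M) : Set K.M := K.polarG (K.polarM B)

/-- A set of objects is closed when it equals its closure. -/
def ClosedG (A : Set K.G) : Prop := K.clG A = A

/-- A set of attributes is closed when it equals its closure. -/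
def ClosedM (B : Set K.M) : Prop := K.clM B = B

/-- The dual context `K* = (M, G, I†)`. -/
def dual : FormalContext := ⟨K.M, K.G, fun m g => K.I g m⟩

/-- The direct product `K1 ⊗ K2` of formal contexts (Ganter–Wille). -/
def dprod (K1 K2 : FormalContext) : FormalContext :=
  ⟨K1.G × K2.G, K1.M × K2.M, fun g m => K1.I g.1 m.1 ∨ K2.I g.2 m.2⟩

end FormalContext

/-- The trivial context `I = ({⋆},{⋆},≠)`. -/
def trivCxt : FormalContext := ⟨PUnit, PUnit, fun a b => a ≠ b⟩

/-- The image `R(S)` of a set under a relation. -/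
def relImage {X Y : Type*} (R : X → Y → Prop) (S : Set X) : Set Y :=
  {y | ∃ x ∈ S, R x y}

/-- `R^•(T) = {x | R(x) ⊆ T}`. -/
def relDot {X Y : Type*} (R : X → Y → Prop) (T : Set Y) : Set X :=
  {x | ∀ y, R x y → y ∈ T}

/-- `R_•(S) = {y | ∀ x ∈ S, R(x,y)}`. -/
def relLower {X Y : Type*} (R : X → Y → Prop) (S : Set X) : Set Y :=
  {y | ∀ x ∈ S, R x y}

/-- A closed relation `K1 → K2`: each row `R(g)` is closed in `K2` and
`R^•` preserves closed sets. -/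
structure IsClosedRel (K1 K2 : FormalContext) (R : K1.G → K2.G → Prop) : Prop where
  row_closed : ∀ g : K1.G, K2.ClosedG (relImage R {g})
  dot_closed : ∀ Y : Set K2.G, K2.ClosedG Y → K1.ClosedG (relDot R Y)

/-- Composition of closed relations: `(S ∘ R)(g) := cl(S(R(g)))`, closure in `K`. -/
def relComp {X Y : Type*} (K : FormalContext) (S : Y → K.G → Prop) (R : X → Y → Prop) :
    X → K.G → Prop :=
  fun g h => h ∈ K.clG (relImage S (relImage R {g}))

/-- Composition on the attribute side: `(S ∘ R)(m) := cl(S(R(m)))`, closure on the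
attribute side of `K`. -/
def relCompM {X Y : Type*} (K : FormalContext) (S : Y → K.M → Prop) (R : X → Y → Prop) :
    X → K.M → Prop :=
  fun m n => n ∈ K.clM (relImage S (relImage R {m}))

/-- The identity closed relation on `K`: `g ↦ cl({g})`. -/
def idClosedRel (K : FormalContext) : K.G → K.G → Prop := fun g h => h ∈ K.clG {g}

/-- A Chu correspondence `(R,S) : K1 → K2`. -/
structure IsChu (K1 K2 : FormalContext) (R : K1.G → K2.G → Prop) (S : K2.M → K1.M → Prop) :
    Prop where
  extent_closed : ∀ g : K1.G, K2.ClosedG (relImage R {g})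
  intent_closed : ∀ m : K2.M, K1.ClosedM (relImage S {m})
  adj : ∀ (g : K1.G) (m : K2.M),
    (∀ h ∈ relImage R {g}, K2.I h m) ↔ (∀ n ∈ relImage S {m}, K1.I g n)

/-- The intent relation `R*(m) := (R^•(m'))'` of a (closed) relation `R`. -/
def starRel (K1 K2 : FormalContext) (R : K1.G → K2.G → Prop) : K2.M → K1.M → Prop :=
  fun m n => n ∈ K1.polarG (relDot R (K2.polarM {m}))

/-- A bond from `K1` to `K2`: a relation `B ⊆ G1 × M2` with closed rows and columns. -/
structure IsBond (K1 K2 : FormalContext) (B : K1.G → K2.M → Prop) : Prop where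
  row_closed : ∀ g : K1.G, K2.ClosedM (relImage B {g})
  col_closed : ∀ m : K2.M, K1.ClosedG {g | B g m}

/-- The tensor `(R1 ⊗ R2)(g1,g2) := cl(R1(g1) × R2(g2))` of relations, closure in `K3 ⊗ K4`. -/
def tensorRelMor (K3 K4 : FormalContext) {X Y : Type*}
    (R1 : X → K3.G → Prop) (R2 : Y → K4.G → Prop) :
    X × Y → (K3.dprod K4).G → Prop :=
  fun p q => q ∈ (K3.dprod K4).clG (relImage R1 {p.1} ×ˢ relImage R2 {p.2})

/-- The concept of `K` generated by a set of objects `A`: `(cl(A), A')`. -/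
def conceptOfSet (K : FormalContext) (A : Set K.G) : Concept K.G K.M K.I where
  extent := K.clG A
  intent := K.polarG A
  upperPolar_extent := upperPolar_lowerPolar_upperPolar (r := K.I) (s := A)
  lowerPolar_intent := rfl

/-- The sup-lattice map `ℬ(R)` on concept lattices induced by a relation:
`(A,A') ↦ (cl(R(A)), R(A)')`. -/
def conceptMap (K1 K2 : FormalContext) (R : K1.G → K2.G → Prop) :
    Concept K1.G K1.M K1.I → Concept K2.G K2.M K2.I :=
  fun c => conceptOfSet K2 (relImage R c.extent)

/-- The incidence relation of the context whose concept lattice is the concept tensor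
`V1 ⊗ V2`: `(x,y) ∇ (w,z) iff x ≤ w or y ≤ z`. -/
def tensorRel (V1 V2 : Type*) [CompleteLattice V1] [CompleteLattice V2] :
    V1 × V2 → V1 × V2 → Prop :=
  fun p q => p.1 ≤ q.1 ∨ p.2 ≤ q.2

/-- The concept tensor `V1 ⊗ V2` of complete lattices (Wille's tensor product). -/
abbrev ConceptTensor (V1 V2 : Type*) [CompleteLattice V1] [CompleteLattice V2] :=
  Concept (V1 × V2) (V1 × V2) (tensorRel V1 V2)

/-- The tensorial operation `x ⊼ y`: the concept with extent `cl{(x,y)}` and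
intent `{(x,y)}'`. -/
def wedge {V1 V2 : Type*} [CompleteLattice V1] [CompleteLattice V2] (x : V1) (y : V2) :
    ConceptTensor V1 V2 where
  extent := lowerPolar (tensorRel V1 V2) (upperPolar (tensorRel V1 V2) {(x, y)})
  intent := upperPolar (tensorRel V1 V2) {(x, y)}
  upperPolar_extent := upperPolar_lowerPolar_upperPolar (r := tensorRel V1 V2) (s := {(x, y)})
  lowerPolar_intent := rfl

/-- Two subsets of a complete lattice are mutually distributive: all families indexed
by a set `ι` satisfy the two distributivity laws. -/
def MutuallyDistrib {M : Type u} [CompleteLattice M] (X Y : Set M) : Prop :=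
  ∀ (ι : Type u) (x y : ι → M), (∀ i, x i ∈ X) → (∀ i, y i ∈ Y) →
    ((⨆ i, x i ⊓ y i) = ⨅ J : Set ι, ((⨆ j ∈ J, x j) ⊔ ⨆ k ∈ Jᶜ, y k)) ∧
    ((⨅ i, x i ⊔ y i) = ⨆ J : Set ι, ((⨅ j ∈ J, x j) ⊓ ⨅ k ∈ Jᶜ, y k))
lemma clG_mono (K : FormalContext) {A B : Set K.G} (h : A ⊆ B) : K.clG A ⊆ K.clG B :=
  lowerPolar_anti _ (upperPolar_anti _ h)

lemma subset_clG (K : FormalContext) (A : Set K.G) : A ⊆ K.clG A :=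
  subset_lowerPolar_upperPolar _ _

lemma clG_clG (K : FormalContext) (A : Set K.G) : K.clG (K.clG A) = K.clG A := by
  unfold FormalContext.clG FormalContext.polarG FormalContext.polarM
  rw [upperPolar_lowerPolar_upperPolar]

/-- For closed relations `R1 : K1 → K3` and `R2 : K2 → K4`,
`cl((R1 ⊗ R2)(A×B)) = cl(R1(A) × R2(B))` in `K3 ⊗ K4`. -/
theorem tensorRelMor_image (K1 K2 K3 K4 : FormalContext)
    (R1 : K1.G → K3.G → Prop) (R2 : K2.G → K4.G → Prop)
    (h1 : IsClosedRel K1 K3 R1) (h2 : IsClosedRel K2 K4 R2) :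
    ∀ (A : Set K1.G) (B : Set K2.G),
      (K3.dprod K4).clG (relImage (tensorRelMor K3 K4 R1 R2) (A ×ˢ B)) =
        (K3.dprod K4).clG (relImage R1 A ×ˢ relImage R2 B) := by
  intro A B
  apply subset_antisymm
  · -- relImage tensor ⊆ clG (R1(A) × R2(B))
    have key : relImage (tensorRelMor K3 K4 R1 R2) (A ×ˢ B) ⊆
        (K3.dprod K4).clG (relImage R1 A ×ˢ relImage R2 B) := by
      rintro q ⟨⟨a, b⟩, ⟨ha, hb⟩, hq⟩
      have hsub : relImage R1 {a} ×ˢ relImage R2 {b} ⊆ relImage R1 A ×ˢ relImage R2 B := by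
        rintro ⟨x, y⟩ ⟨⟨a', ha', hx⟩, ⟨b', hb', hy⟩⟩
        exact ⟨⟨a', (by simpa using ha') ▸ ha, hx⟩, ⟨b', (by simpa using hb') ▸ hb, hy⟩⟩
      exact clG_mono _ hsub hq
    calc (K3.dprod K4).clG (relImage (tensorRelMor K3 K4 R1 R2) (A ×ˢ B))
        ⊆ (K3.dprod K4).clG ((K3.dprod K4).clG (relImage R1 A ×ˢ relImage R2 B)) :=
          clG_mono _ key
      _ = (K3.dprod K4).clG (relImage R1 A ×ˢ relImage R2 B) := clG_clG _ _
  · apply clG_mono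
    rintro ⟨x, y⟩ ⟨⟨a, ha, hx⟩, ⟨b, hb, hy⟩⟩
    refine ⟨(a, b), ⟨ha, hb⟩, ?_⟩
    exact subset_clG _ _ ⟨⟨a, rfl, hx⟩, ⟨b, rfl, hy⟩⟩
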